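/- arXiv:1604.06673 — 3 statements merged into one kernel-verified Lean document; each statement's English description precedes it below -/
import Mathlib

section
/- Two distinct fibers are disjoint: if u, v ∈ ℝ⁴ \ {0} and K(u) ≠ K(v), then the sets {R(ϑ)u : ϑ ∈ ℝ} and {R(ϑ)v : ϑ ∈ ℝ} are disjoint. -/
open Matrix Real

/-- The KS matrix `L(u)`. -/
noncomputable def KSL (u : EuclideanSpace ℝ (Fin 4)) : Matrix (Fin 4) (Fin 4) ℝ :=
  !![u 0, -u 1, -u 2, u 3;
     u 1,  u 0, -u 3, -u 2;
     u 2,  u 3,  u 0,  u 1;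
     u 3, -u 2,  u 1, -u 0]

/-- The KS map `K(u) = L(u) u`. -/
noncomputable def KSmap (u : EuclideanSpace ℝ (Fin 4)) : EuclideanSpace ℝ (Fin 4) :=
  WithLp.toLp 2 ((KSL u).mulVec u)

/-- The fiber rotation matrix `R(ϑ)`. -/
noncomputable def KSR (θ : ℝ) : Matrix (Fin 4) (Fin 4) ℝ :=
  !![Real.cos θ, 0, 0, -Real.sin θ;
     0, Real.cos θ, Real.sin θ, 0;
     0, -Real.sin θ, Real.cos θ, 0;
     Real.sin θ, 0, 0, Real.cos θ]

/-- The bilinear relation `ℓ(u,w) = u₁w₄ - u₂w₃ + u₃w₂ - u₄w₁`. -/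
noncomputable def KSbilin (u w : EuclideanSpace ℝ (Fin 4)) : ℝ :=
  u 0 * w 3 - u 1 * w 2 + u 2 * w 1 - u 3 * w 0

/-! The KS map is invariant under the fiber rotations: expanding `K(R(ϑ)u)` componentwise,
every `ϑ`-dependence collapses through `sin² ϑ + cos² ϑ = 1`. So `K` is constant on each fiber,
and a point common to the fibers of `u` and `v` would force `K(u) = K(v)`. -/

theorem KSmap_eq (u : EuclideanSpace ℝ (Fin 4)) :
    KSmap u = !₂[u 0 ^ 2 - u 1 ^ 2 - u 2 ^ 2 + u 3 ^ 2, 2 * (u 0 * u 1 - u 2 * u 3),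
      2 * (u 0 * u 2 + u 1 * u 3), 0] := by
  ext i
  fin_cases i <;> simp [KSmap, KSL, dotProduct, Fin.sum_univ_four] <;> ring

theorem KSR_mulVec (θ : ℝ) (u : Fin 4 → ℝ) :
    KSR θ *ᵥ u = ![cos θ * u 0 - sin θ * u 3, cos θ * u 1 + sin θ * u 2,
      -sin θ * u 1 + cos θ * u 2, sin θ * u 0 + cos θ * u 3] := by
  ext i
  fin_cases i <;> simp [KSR, mulVec, dotProduct, Fin.sum_univ_four, sub_eq_add_neg]

theorem KSmap_toLp_KSR_mulVec (θ : ℝ) (u : EuclideanSpace ℝ (Fin 4)) :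
    KSmap (WithLp.toLp 2 (KSR θ *ᵥ u)) = KSmap u := by
  have h := sin_sq_add_cos_sq θ
  rw [KSmap_eq, KSmap_eq, KSR_mulVec]
  simp only [cons_val_zero, cons_val_one, cons_val_two, cons_val_three, head_cons, tail_cons,
    WithLp.toLp.injEq, vecCons_inj, and_true]
  refine ⟨?_, ?_, ?_⟩
  · linear_combination (u 0 ^ 2 - u 1 ^ 2 - u 2 ^ 2 + u 3 ^ 2) * h
  · linear_combination 2 * (u 0 * u 1 - u 2 * u 3) * h
  · linear_combination 2 * (u 0 * u 2 + u 1 * u 3) * h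

theorem KSmap_eq_of_ofLp_eq_KSR_mulVec {u w : EuclideanSpace ℝ (Fin 4)} {θ : ℝ}
    (h : (w : Fin 4 → ℝ) = KSR θ *ᵥ u) : KSmap w = KSmap u := by
  rw [← KSmap_toLp_KSR_mulVec θ u, ← h, WithLp.toLp_ofLp]

theorem ks_distinct_fibers_disjoint_general (u v : EuclideanSpace ℝ (Fin 4))
    (hK : KSmap u ≠ KSmap v) :
    Disjoint {w : EuclideanSpace ℝ (Fin 4) | ∃ θ : ℝ, w = (KSR θ).mulVec u}
      {w : EuclideanSpace ℝ (Fin 4) | ∃ θ : ℝ, w = (KSR θ).mulVec v} := by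
  rw [Set.disjoint_left]
  rintro w ⟨θ₁, hw₁⟩ ⟨θ₂, hw₂⟩
  exact hK <|
    (KSmap_eq_of_ofLp_eq_KSR_mulVec hw₁).symm.trans (KSmap_eq_of_ofLp_eq_KSR_mulVec hw₂)

theorem ks_distinct_fibers_disjoint (u v : EuclideanSpace ℝ (Fin 4))
    (hu : u ≠ 0) (hv : v ≠ 0) (hK : KSmap u ≠ KSmap v) :
    Disjoint {w : EuclideanSpace ℝ (Fin 4) | ∃ θ : ℝ, w = (KSR θ).mulVec u}
      {w : EuclideanSpace ℝ (Fin 4) | ∃ θ : ℝ, w = (KSR θ).mulVec v} :=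
  ks_distinct_fibers_disjoint_general u v hK
end

section
/- If K(u) = K(w) for nonzero u, w ∈ ℝ⁴, then there exists an angle ϑ such that w = R(ϑ)u; that is, the preimage of any point under the KS map is exactly one fiber. -/
open Matrix Real

/-!
Identify `u ∈ ℝ⁴` with `(a, b) = (u₀ + u₃ i, u₁ - u₂ i) ∈ ℂ²`. Then `R(ϑ)` is multiplication of both
coordinates by `e^{iϑ}`, and `K(u) = (|a|² - |b|², 2 Re (a b̄), 2 Im (a b̄), 0)` is the Hopf map
`(a, b) ↦ (|a|² - |b|², 2 a b̄)`. If two pairs have the same Hopf image, the product and the difference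
of `|a|²` and `|b|²` agree, hence so do `|a|²` and `|b|²` themselves; with `s = |a|² + |b|²`, the number
`c = (a' ā + b' b̄) / s` then satisfies `(a', b') = c (a, b)` and `|c| = 1`.
-/

open ComplexConjugate

theorem eq_and_eq_of_sub_eq_of_mul_eq {R : Type*} [CommRing R] [LinearOrder R]
    [IsStrictOrderedRing R] {x y x' y' : R} (hxy : 0 ≤ x + y) (hxy' : 0 ≤ x' + y')
    (hsub : x - y = x' - y') (hmul : x * y = x' * y') : x = x' ∧ y = y' := by
  have hsq : (x + y) ^ 2 = (x' + y') ^ 2 := by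
    linear_combination (x - y + x' - y') * hsub + 4 * hmul
  have hadd : x + y = x' + y' := (pow_left_inj₀ hxy hxy' two_ne_zero).mp hsq
  constructor <;> linarith

namespace Complex

/-- The Hopf map `ℂ² → ℝ × ℂ`, up to the factor `2` in its second component. -/
def hopf (p : ℂ × ℂ) : ℝ × ℂ :=
  (normSq p.1 - normSq p.2, p.1 * conj p.2)

theorem normSq_eq_of_hopf_eq {p q : ℂ × ℂ} (h : hopf p = hopf q) :
    normSq p.1 = normSq q.1 ∧ normSq p.2 = normSq q.2 := by
  obtain ⟨hsub, hmul⟩ := Prod.mk.inj h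
  refine eq_and_eq_of_sub_eq_of_mul_eq
    (add_nonneg (normSq_nonneg _) (normSq_nonneg _)) (add_nonneg (normSq_nonneg _) (normSq_nonneg _)) hsub ?_
  simpa only [normSq_mul, normSq_conj] using congrArg normSq hmul

theorem exists_norm_eq_one_smul_of_hopf_eq {p q : ℂ × ℂ} (hp : p ≠ 0) (h : hopf p = hopf q) :
    ∃ c : ℂ, ‖c‖ = 1 ∧ q = c • p := by
  obtain ⟨a, b⟩ := p
  obtain ⟨a', b'⟩ := q
  obtain ⟨ha, hb⟩ : normSq a = normSq a' ∧ normSq b = normSq b' := normSq_eq_of_hopf_eq h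
  have hmul : a * conj b = a' * conj b' := (Prod.mk.inj h).2
  have hmul' : conj a * b = conj a' * b' := by simpa using congrArg conj hmul
  set s := normSq a + normSq b
  have hs : 0 < s := by
    by_contra! hs
    have ha0 : normSq a = 0 := by linarith [normSq_nonneg a, normSq_nonneg b]
    have hb0 : normSq b = 0 := by linarith [normSq_nonneg a, normSq_nonneg b]
    exact hp (Prod.ext (normSq_eq_zero.mp ha0) (normSq_eq_zero.mp hb0))
  have ha' : a * conj a = a' * conj a' := by rw [mul_conj, mul_conj, ha]
  have hb' : b * conj b = b' * conj b' := by rw [mul_conj, mul_conj, hb]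
  have hs' : (s : ℂ) = a * conj a + b * conj b := by push_cast [s, mul_conj]; rfl
  have hsne : (s : ℂ) ≠ 0 := ofReal_ne_zero.mpr hs.ne'
  set c := (a' * conj a + b' * conj b) / s
  have hc : (a', b') = c • (a, b) := by
    simp only [c, Prod.smul_mk, smul_eq_mul, div_mul_eq_mul_div, Prod.mk.injEq]
    constructor <;> rw [eq_div_iff hsne, hs']
    · linear_combination (-b') * hmul + a' * hb'
    · linear_combination b' * ha' - a' * hmul'
  refine ⟨c, ?_, hc⟩
  have hnormSq : normSq c * s = s := by
    simp only [Prod.smul_mk, smul_eq_mul, Prod.mk.injEq] at hc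
    rw [mul_add, ← normSq_mul, ← normSq_mul, ← hc.1, ← hc.2, ← ha, ← hb]
  have hnormSq_one : ‖c‖ ^ 2 = 1 := by
    rw [← normSq_eq_norm_sq]
    exact (mul_eq_right₀ hs.ne').mp hnormSq
  exact (pow_eq_one_iff_of_nonneg (norm_nonneg c) two_ne_zero).mp hnormSq_one

end Complex

noncomputable def ksPair (u : EuclideanSpace ℝ (Fin 4)) : ℂ × ℂ :=
  (⟨u 0, u 3⟩, ⟨u 1, -u 2⟩)

theorem ksPair_injective : Function.Injective ksPair := by
  intro u w h
  simp only [ksPair, Prod.mk.injEq, Complex.ext_iff, neg_inj] at h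
  ext i
  fin_cases i <;> simp [h]

theorem ksPair_ne_zero {u : EuclideanSpace ℝ (Fin 4)} (hu : u ≠ 0) : ksPair u ≠ 0 := by
  have hzero : ksPair 0 = 0 := Prod.ext (Complex.ext rfl rfl) (Complex.ext rfl neg_zero)
  exact hzero ▸ ksPair_injective.ne hu

theorem ksPair_KSR_mulVec (θ : ℝ) (u : EuclideanSpace ℝ (Fin 4)) :
    ksPair (WithLp.toLp 2 ((KSR θ).mulVec u)) = Complex.exp (θ * Complex.I) • ksPair u := by
  refine Prod.ext (Complex.ext ?_ ?_) (Complex.ext ?_ ?_) <;>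
    simp only [ksPair, KSR, cons_mulVec, dotProduct, Fin.sum_univ_four, cons_val_zero, cons_val_one,
      cons_val, empty_mulVec, Prod.smul_mk, smul_eq_mul, Complex.mul_re, Complex.mul_im,
      Complex.exp_ofReal_mul_I_re, Complex.exp_ofReal_mul_I_im] <;> ring

theorem hopf_ksPair_eq_of_KSmap_eq {u w : EuclideanSpace ℝ (Fin 4)} (h : KSmap u = KSmap w) :
    Complex.hopf (ksPair u) = Complex.hopf (ksPair w) := by
  have hK (i : Fin 4) : KSmap u i = KSmap w i := by rw [h]
  have h₀ := hK 0
  have h₁ := hK 1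
  have h₂ := hK 2
  simp only [KSmap, KSL, cons_mulVec, dotProduct, Fin.sum_univ_four, cons_val_zero, cons_val_one,
    cons_val, empty_mulVec] at h₀ h₁ h₂
  refine Prod.ext ?_ (Complex.ext ?_ ?_) <;>
    simp only [Complex.hopf, ksPair, Complex.normSq_apply, Complex.mul_re, Complex.mul_im,
      Complex.conj_re, Complex.conj_im] <;> linarith

theorem ks_preimage_is_fiber_general (u w : EuclideanSpace ℝ (Fin 4))
    (hu : u ≠ 0) (h : KSmap u = KSmap w) :
    ∃ θ : ℝ, w = (WithLp.toLp 2 ((KSR θ).mulVec u) : EuclideanSpace ℝ (Fin 4)) := by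
  obtain ⟨c, hc, hwu⟩ :=
    Complex.exists_norm_eq_one_smul_of_hopf_eq (ksPair_ne_zero hu) (hopf_ksPair_eq_of_KSmap_eq h)
  refine ⟨Complex.arg c, ksPair_injective ?_⟩
  rw [ksPair_KSR_mulVec, hwu]
  congr 1
  simpa [hc] using (Complex.norm_mul_exp_arg_mul_I c).symm

theorem ks_preimage_is_fiber (u w : EuclideanSpace ℝ (Fin 4))
    (hu : u ≠ 0) (hw : w ≠ 0) (h : KSmap u = KSmap w) :
    ∃ θ : ℝ, w = (WithLp.toLp 2 ((KSR θ).mulVec u) : EuclideanSpace ℝ (Fin 4)) :=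
  ks_preimage_is_fiber_general u w hu h
end

section
/- (Conservation of the fiber angle) Let u : ℝ → ℝ⁴ and w : ℝ → ℝ⁴ be differentiable curves with ‖u(s)‖² > 0 for all s, satisfying the bilinear integrals ℓ(u(s), u'(s)) = 0 and ℓ(w(s), w'(s)) = 0 for all s. Suppose w(s) = R(ϑ(s))u(s) for a differentiable function ϑ. Then ϑ'(s) = 0 for all s, so ϑ is constant. -/
/-!
Write `R(θ) = cos θ • 1 + sin θ • J`. Then `w = R(ϑ) u` has derivative
`R(ϑ) (ϑ' • J u + u')`, and since `ℓ(R v, R x) = ℓ(v, x)` and `ℓ(v, J v) = ‖v‖²`, the integral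
`ℓ(w, w') = 0` becomes `‖u‖² ϑ' + ℓ(u, u') = 0`; with `ℓ(u, u') = 0` and `‖u‖ > 0` this forces `ϑ' = 0`.
-/

open Matrix Real

/-- The generator of the fiber rotations: `R(θ) = cos θ • 1 + sin θ • J = exp (θ J)`. -/
noncomputable def KSJ : EuclideanSpace ℝ (Fin 4) →L[ℝ] EuclideanSpace ℝ (Fin 4) :=
  Matrix.toEuclideanCLM (𝕜 := ℝ) !![0, 0, 0, -1; 0, 0, 1, 0; 0, -1, 0, 0; 1, 0, 0, 0]

theorem toLp_KSR_mulVec (θ : ℝ) (v : EuclideanSpace ℝ (Fin 4)) :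
    (WithLp.toLp 2 ((KSR θ).mulVec v) : EuclideanSpace ℝ (Fin 4)) = cos θ • v + sin θ • KSJ v := by
  ext i
  fin_cases i <;> simp [KSR, KSJ, mulVec, dotProduct, Fin.sum_univ_four] <;> ring

theorem hasDerivAt_cos_smul_add_sin_smul {E : Type*} [NormedAddCommGroup E] [NormedSpace ℝ E]
    (J : E →L[ℝ] E) {ϑ : ℝ → ℝ} {u : ℝ → E} {p s : ℝ} {u' : E}
    (hϑ : HasDerivAt ϑ p s) (hu : HasDerivAt u u' s) :
    HasDerivAt (fun t => cos (ϑ t) • u t + sin (ϑ t) • J (u t))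
      (p • (cos (ϑ s) • J (u s) - sin (ϑ s) • u s) + (cos (ϑ s) • u' + sin (ϑ s) • J u')) s := by
  have hcos := (hasDerivAt_cos (ϑ s)).comp s hϑ
  have hsin := (hasDerivAt_sin (ϑ s)).comp s hϑ
  refine ((hcos.smul hu).add (hsin.smul (J.hasFDerivAt.comp_hasDerivAt s hu))).congr_deriv ?_
  simp only [Function.comp_apply]
  module

theorem KSbilin_cos_smul_add_sin_smul (c s p : ℝ) (v x : EuclideanSpace ℝ (Fin 4)) :
    KSbilin (c • v + s • KSJ v) (p • (c • KSJ v - s • v) + (c • x + s • KSJ x)) =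
      (c ^ 2 + s ^ 2) * (‖v‖ ^ 2 * p + KSbilin v x) := by
  simp [KSbilin, KSJ, EuclideanSpace.real_norm_sq_eq, Fin.sum_univ_four, mulVec, dotProduct]
  ring

theorem ks_fiber_angle_conserved_general (u w : ℝ → EuclideanSpace ℝ (Fin 4)) (ϑ : ℝ → ℝ)
    (hu : Differentiable ℝ u) (hϑ : Differentiable ℝ ϑ)
    (hr : ∀ s, ‖u s‖ ^ 2 > 0)
    (hℓu : ∀ s, KSbilin (u s) (deriv u s) = 0)
    (hℓw : ∀ s, KSbilin (w s) (deriv w s) = 0)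
    (hfib : ∀ s, w s = (WithLp.toLp 2 ((KSR (ϑ s)).mulVec (u s)) : EuclideanSpace ℝ (Fin 4))) :
    (∀ s, deriv ϑ s = 0) ∧ ∀ s₁ s₂, ϑ s₁ = ϑ s₂ := by
  have hw_eq : w = fun t => cos (ϑ t) • u t + sin (ϑ t) • KSJ (u t) := by
    funext t
    rw [hfib, toLp_KSR_mulVec]
  have hϑ' : ∀ s, deriv ϑ s = 0 := by
    intro s
    have hw' := (hasDerivAt_cos_smul_add_sin_smul KSJ (hϑ s).hasDerivAt (hu s).hasDerivAt).deriv
    have hℓ := hℓw s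
    rw [hw_eq] at hℓ
    rw [hw', KSbilin_cos_smul_add_sin_smul, cos_sq_add_sin_sq, hℓu s, add_zero, one_mul] at hℓ
    exact (mul_eq_zero.1 hℓ).resolve_left (hr s).ne'
  exact ⟨hϑ', fun s₁ s₂ => is_const_of_deriv_eq_zero hϑ hϑ' s₁ s₂⟩

theorem ks_fiber_angle_conserved (u w : ℝ → EuclideanSpace ℝ (Fin 4)) (ϑ : ℝ → ℝ)
    (hu : Differentiable ℝ u) (hw : Differentiable ℝ w) (hϑ : Differentiable ℝ ϑ)
    (hr : ∀ s, ‖u s‖ ^ 2 > 0)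
    (hℓu : ∀ s, KSbilin (u s) (deriv u s) = 0)
    (hℓw : ∀ s, KSbilin (w s) (deriv w s) = 0)
    (hfib : ∀ s, w s = (WithLp.toLp 2 ((KSR (ϑ s)).mulVec (u s)) : EuclideanSpace ℝ (Fin 4))) :
    (∀ s, deriv ϑ s = 0) ∧ ∀ s₁ s₂, ϑ s₁ = ϑ s₂ :=
  ks_fiber_angle_conserved_general u w ϑ hu hϑ hr hℓu hℓw hfib
end
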